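/- Fix Δx > 0, Δt > 0, λ ∈ ℝ and an integer M ≥ 1. Let u : ℤ × ℤ → ℝ be a grid function with u(m + M, n) = u(m, n) for all (m,n) (spatial M-periodicity), and suppose u satisfies the EC₁₀(λ) scheme at every point: D_m(μ_m φ) + D_n u_{0,0} = 0, where φ = (1/3)·(μ_n((u_{-1,0})²))·(μ_n u_{-1,0}) + D_m²μ_n u_{-2,0} + λ·D_m D_n μ_m u_{-2,0}. Then the discrete mass Σ_{i=0}^{M−1} u(i, n) is independent of n. -/

import Mathlib

noncomputable section

/-- Shift operator: `(Sh i j u)(m,n) = u(m+i, n+j)`. -/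
def Sh (i j : ℤ) (f : ℤ × ℤ → ℝ) : ℤ × ℤ → ℝ := fun p => f (p.1 + i, p.2 + j)

/-- Forward difference in space: `D_m f = (S_m f − f)/Δx`. -/
def Dm (dx : ℝ) (f : ℤ × ℤ → ℝ) : ℤ × ℤ → ℝ := fun p => (f (p.1 + 1, p.2) - f p) / dx

/-- Forward difference in time: `D_n f = (S_n f − f)/Δt`. -/
def Dn (dt : ℝ) (f : ℤ × ℤ → ℝ) : ℤ × ℤ → ℝ := fun p => (f (p.1, p.2 + 1) - f p) / dt

/-- Forward average in space: `μ_m f = (S_m f + f)/2`. -/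
def μm (f : ℤ × ℤ → ℝ) : ℤ × ℤ → ℝ := fun p => (f (p.1 + 1, p.2) + f p) / 2

/-- Forward average in time: `μ_n f = (S_n f + f)/2`. -/
def μn (f : ℤ × ℤ → ℝ) : ℤ × ℤ → ℝ := fun p => (f (p.1, p.2 + 1) + f p) / 2

/-- The quantity `φ` of the EC₁₀(λ) scheme. -/
def phiEC10 (dx dt lam : ℝ) (u : ℤ × ℤ → ℝ) : ℤ × ℤ → ℝ :=
  (1/3 : ℝ) • (μn ((Sh (-1) 0 u) ^ 2) * μn (Sh (-1) 0 u))
    + Dm dx (Dm dx (μn (Sh (-2) 0 u)))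
    + lam • Dm dx (Dn dt (μm (Sh (-2) 0 u)))

section Aux

/-- periodicity predicate -/
def PerM (M : ℤ) (f : ℤ × ℤ → ℝ) : Prop := ∀ m n : ℤ, f (m + M, n) = f (m, n)

variable {M : ℤ}

lemma PerM.sh {f} (h : PerM M f) (i j : ℤ) : PerM M (Sh i j f) := by
  intro m n; simp only [Sh]
  have := h (m + i) (n + j)
  simpa [add_right_comm] using this

lemma PerM.dm {f} (h : PerM M f) (dx : ℝ) : PerM M (Dm dx f) := by
  intro m n; simp only [Dm]
  rw [show (m + M + 1 : ℤ) = m + 1 + M by ring, h, h]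

lemma PerM.dn {f} (h : PerM M f) (dt : ℝ) : PerM M (Dn dt f) := by
  intro m n; simp only [Dn]; rw [h, h]

lemma PerM.mum {f} (h : PerM M f) : PerM M (μm f) := by
  intro m n; simp only [μm]
  rw [show (m + M + 1 : ℤ) = m + 1 + M by ring, h, h]

lemma PerM.mun {f} (h : PerM M f) : PerM M (μn f) := by
  intro m n; simp only [μn]; rw [h, h]

lemma PerM.mul {f g} (hf : PerM M f) (hg : PerM M g) : PerM M (f * g) := by
  intro m n; simp only [Pi.mul_apply, hf m n, hg m n]

lemma PerM.pow {f} (hf : PerM M f) (k : ℕ) : PerM M (f ^ k) := by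
  intro m n; simp only [Pi.pow_apply, hf m n]

lemma PerM.add {f g} (hf : PerM M f) (hg : PerM M g) : PerM M (f + g) := by
  intro m n; simp only [Pi.add_apply, hf m n, hg m n]

lemma PerM.smul {f} (hf : PerM M f) (c : ℝ) : PerM M (c • f) := by
  intro m n; simp only [Pi.smul_apply, hf m n]

lemma PerM.phi {u} (h : PerM M u) (dx dt lam : ℝ) :
    PerM M (phiEC10 dx dt lam u) := by
  unfold phiEC10
  exact (((((h.sh _ _).pow 2).mun.mul (h.sh _ _).mun).smul _).add
    (((h.sh _ _).mun.dm dx).dm dx)).add ((((h.sh _ _).mum.dn dt).dm dx).smul lam)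

end Aux

/-- Spatially periodic solutions of the EC₁₀(λ) scheme conserve the discrete mass. -/
theorem EC10_discrete_mass_invariant (dx dt lam : ℝ) (hdx : 0 < dx) (hdt : 0 < dt)
    (M : ℕ) (hM : 1 ≤ M) (u : ℤ × ℤ → ℝ)
    (hper : ∀ m n : ℤ, u (m + (M : ℤ), n) = u (m, n))
    (hscheme : ∀ p : ℤ × ℤ, (Dm dx (μm (phiEC10 dx dt lam u)) + Dn dt u) p = 0) :
    ∀ n₁ n₂ : ℤ,
      (∑ i ∈ Finset.range M, u ((i : ℤ), n₁)) = ∑ i ∈ Finset.range M, u ((i : ℤ), n₂) := by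
  intro n₁ n₂
  have hper' : PerM (M : ℤ) u := fun m n => hper m n
  set g := μm (phiEC10 dx dt lam u) with hg
  have hgper : PerM (M : ℤ) g := (hper'.phi dx dt lam).mum
  have key : ∀ n : ℤ, (∑ i ∈ Finset.range M, u ((i : ℤ), n + 1))
      = ∑ i ∈ Finset.range M, u ((i : ℤ), n) := by
    intro n
    have hstep : ∀ i : ℤ, u (i, n + 1) - u (i, n)
        = -(dt / dx) * (g (i + 1, n) - g (i, n)) := by
      intro i
      have := hscheme (i, n)
      simp only [Pi.add_apply, Dm, Dn] at this
      field_simp at this ⊢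
      linarith
    have tel : (∑ i ∈ Finset.range M, (g ((i : ℤ) + 1, n) - g ((i : ℤ), n)))
        = g ((M : ℤ), n) - g ((0 : ℤ), n) := by
      have := Finset.sum_range_sub (fun i : ℕ => g ((i : ℤ), n)) M
      simpa [Int.natCast_succ] using this
    have hzero : g ((M : ℤ), n) - g ((0 : ℤ), n) = 0 := by
      have := hgper 0 n
      simp at this
      simp [this]
    have : (∑ i ∈ Finset.range M, (u ((i : ℤ), n + 1) - u ((i : ℤ), n))) = 0 := by
      calc (∑ i ∈ Finset.range M, (u ((i : ℤ), n + 1) - u ((i : ℤ), n)))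
          = ∑ i ∈ Finset.range M, -(dt / dx) * (g ((i : ℤ) + 1, n) - g ((i : ℤ), n)) := by
            exact Finset.sum_congr rfl fun i _ => hstep i
        _ = -(dt / dx) * (∑ i ∈ Finset.range M, (g ((i : ℤ) + 1, n) - g ((i : ℤ), n))) := by
            rw [Finset.mul_sum]
        _ = 0 := by rw [tel, hzero, mul_zero]
    rw [Finset.sum_sub_distrib] at this
    linarith
  have const : ∀ n : ℤ, (∑ i ∈ Finset.range M, u ((i : ℤ), n))
      = ∑ i ∈ Finset.range M, u ((i : ℤ), 0) := by
    intro n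
    induction n using Int.induction_on with
    | zero => rfl
    | succ k ih => rw [key k]; exact ih
    | pred k ih => rw [← ih, ← key (-k - 1)]; ring_nf
  rw [const n₁, const n₂]
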